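/- arXiv:2304.13106 — 4 statements merged into one kernel-verified Lean document; each statement's English description precedes it below -/
import Mathlib

section
/- Let α₁, α₂, α₃ ∈ (0, π) satisfy α₁ + α₂ + α₃ = 2π and α₂ ≥ α₁, and let σ₂₃ = κ sin α₁, σ₁₃ = κ sin α₂, σ₁₂ = κ sin α₃ for some κ > 0. Define, for real μ₁, μ₂, y, E(μ₁, μ₂, y) := √( [sin(α₃/2)(σ₁₃+σ₂₃) + (μ₂ − μ₁ + sin((α₂−α₁)/2))(σ₂₃−σ₁₃)]² + [(y + cos(α₃/2))(σ₁₃+σ₂₃)]² ) + σ₁₂ √( (μ₁+μ₂)² + (cos((α₂−α₁)/2) − y)² ). Then for all μ₁ ∈ [0, sin(α₃/2) + sin((α₂−α₁)/2)], μ₂ ∈ [0, sin(α₃/2) − sin((α₂−α₁)/2)] and y ∈ [−cos(α₃/2), cos((α₂−α₁)/2)], one has E(μ₁, μ₂, y) ≥ σ₁₂ + σ₁₃ + σ₂₃, and equality holds at μ₁ = sin((α₂−α₁)/2), μ₂ = 0, y = 0. -/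
noncomputable section

open MeasureTheory Real Set Metric Filter Topology
open scoped RealInnerProductSpace

abbrev Pt : Type := EuclideanSpace ℝ (Fin 2)

def mk2 (x y : ℝ) : Pt := (EuclideanSpace.equiv (Fin 2) ℝ).symm ![x, y]

def circlePt (θ : ℝ) : Pt := mk2 (Real.cos θ) (Real.sin θ)

def gradSq (u : Pt → Pt) (z : Pt) : ℝ :=
  ∑ i : Fin 2, ‖fderiv ℝ u z (EuclideanSpace.basisFun (Fin 2) ℝ i)‖ ^ 2

def lap (u : Pt → Pt) (z : Pt) : Pt :=
  ∑ i : Fin 2, fderiv ℝ (fun w => fderiv ℝ u w (EuclideanSpace.basisFun (Fin 2) ℝ i)) z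
    (EuclideanSpace.basisFun (Fin 2) ℝ i)

def H1 (W : Pt → ℝ) (a : Fin 3 → Pt) : Prop :=
  ContDiff ℝ 2 W ∧ (∀ z, 0 ≤ W z) ∧ Function.Injective a ∧
  (∀ z, W z = 0 ↔ ∃ i, z = a i) ∧
  (∃ M : ℝ, 0 < M ∧ ∀ z : Pt, M < ‖z‖ → 0 < ⟪gradient W z, z⟫) ∧
  (∃ c1 c2 : ℝ, 0 < c1 ∧ c1 < c2 ∧ ∀ i : Fin 3, ∀ ξ : Pt,
    c1 * ‖ξ‖ ^ 2 ≤ ⟪ξ, fderiv ℝ (gradient W) (a i) ξ⟫ ∧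
    ⟪ξ, fderiv ℝ (gradient W) (a i) ξ⟫ ≤ c2 * ‖ξ‖ ^ 2)

def act1D (W : Pt → ℝ) (U : ℝ → Pt) : ℝ := ∫ η : ℝ, (‖deriv U η‖ ^ 2 / 2 + W (U η))

def LocAC (U : ℝ → Pt) : Prop :=
  ∃ U' : ℝ → Pt, (∀ s t : ℝ, IntervalIntegrable U' volume s t) ∧
    ∀ s t : ℝ, U t - U s = ∫ x in s..t, U' x

def sigmaST (W : Pt → ℝ) (p q : Pt) : ℝ :=
  sInf {e | ∃ U : ℝ → Pt, LocAC U ∧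
    Tendsto U atBot (𝓝 p) ∧ Tendsto U atTop (𝓝 q) ∧ e = act1D W U}

def H2 (W : Pt → ℝ) (a : Fin 3 → Pt) : Prop :=
  ∀ i j k : Fin 3, i ≠ j → j ≠ k → i ≠ k →
    sigmaST W (a i) (a j) < sigmaST W (a i) (a k) + sigmaST W (a j) (a k)

def JJ (W : Pt → ℝ) (u : Pt → Pt) (Ω : Set Pt) : ℝ :=
  ∫ z in Ω, (gradSq u z / 2 + W (u z))

def DeGiorgiMin (W : Pt → ℝ) (u : Pt → Pt) : Prop :=
  ∀ Ω : Set Pt, IsOpen Ω → Bornology.IsBounded Ω →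
    ∀ v : Pt → Pt, ContDiff ℝ 1 v → HasCompactSupport v → tsupport v ⊆ Ω →
      JJ W u Ω ≤ JJ W (u + v) Ω

def geps (a : Fin 3 → Pt) (α1 α2 α3 c0 : ℝ) (g0 : ℝ → ℝ) (ε θ : ℝ) : Pt :=
  if θ < π/2 + (α2 - α1)/2 - c0*ε then a 1
  else if θ < π/2 + (α2 - α1)/2 + c0*ε then
    a 1 + g0 ((θ - (π/2 + (α2 - α1)/2 - c0*ε)) / (2*c0*ε)) • (a 0 - a 1)
  else if θ < 3*π/2 - α3/2 - c0*ε then a 0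
  else if θ < 3*π/2 - α3/2 + c0*ε then
    a 0 + g0 ((θ - (3*π/2 - α3/2 - c0*ε)) / (2*c0*ε)) • (a 2 - a 0)
  else if θ < 3*π/2 + α3/2 - c0*ε then a 2
  else if θ < 3*π/2 + α3/2 + c0*ε then
    a 2 + g0 ((θ - (3*π/2 + α3/2 - c0*ε)) / (2*c0*ε)) • (a 1 - a 2)
  else a 1

def Jeps (W : Pt → ℝ) (ε : ℝ) (v : Pt → Pt) : ℝ :=
  ∫ z in ball (0 : Pt) 1, (ε/2 * gradSq v z + (1/ε) * W (v z))

def admissibleE (W : Pt → ℝ) (a : Fin 3 → Pt) (α1 α2 α3 c0 : ℝ) (g0 : ℝ → ℝ) (ε : ℝ)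
    (v : Pt → Pt) : Prop :=
  ContinuousOn v (closedBall (0 : Pt) 1) ∧ ContDiffOn ℝ 1 v (ball (0 : Pt) 1) ∧
  IntegrableOn (fun z => ε/2 * gradSq v z + (1/ε) * W (v z)) (ball (0 : Pt) 1) volume ∧
  ∀ θ ∈ Ico (0:ℝ) (2*π), v (circlePt θ) = geps a α1 α2 α3 c0 g0 ε θ

def isMinE (W : Pt → ℝ) (a : Fin 3 → Pt) (α1 α2 α3 c0 : ℝ) (g0 : ℝ → ℝ) (ε : ℝ)
    (u : Pt → Pt) : Prop :=
  admissibleE W a α1 α2 α3 c0 g0 ε u ∧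
  ∀ v : Pt → Pt, admissibleE W a α1 α2 α3 c0 g0 ε v → Jeps W ε u ≤ Jeps W ε v

def YoungData (W : Pt → ℝ) (a : Fin 3 → Pt) (α1 α2 α3 : ℝ) : Prop :=
  α1 ∈ Ioo 0 π ∧ α2 ∈ Ioo 0 π ∧ α3 ∈ Ioo 0 π ∧ α1 + α2 + α3 = 2*π ∧ α1 ≤ α2 ∧
  Real.sin α1 / sigmaST W (a 1) (a 2) = Real.sin α2 / sigmaST W (a 0) (a 2) ∧
  Real.sin α2 / sigmaST W (a 0) (a 2) = Real.sin α3 / sigmaST W (a 0) (a 1)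

def g0Data (g0 : ℝ → ℝ) : Prop :=
  ContDiffOn ℝ (⊤ : ℕ∞) g0 (Icc 0 1) ∧ StrictMonoOn g0 (Icc 0 1) ∧
  g0 0 = 0 ∧ g0 1 = 1 ∧ ∀ x ∈ Icc (0:ℝ) 1, |deriv g0 x| ≤ 2

def sector (θa θb : ℝ) : Set Pt :=
  {z | ∃ r θ : ℝ, 0 < r ∧ θa < θ ∧ θ < θb ∧ z = r • circlePt θ}


lemma cs2 (p q x y : ℝ) (h : p ^ 2 + q ^ 2 = 1) : p * x + q * y ≤ Real.sqrt (x ^ 2 + y ^ 2) := by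
  have h1 : (p * x + q * y) ^ 2 ≤ x ^ 2 + y ^ 2 := by nlinarith [sq_nonneg (q * x - p * y)]
  calc p * x + q * y ≤ |p * x + q * y| := le_abs_self _
    _ = Real.sqrt ((p * x + q * y) ^ 2) := (Real.sqrt_sq_eq_abs _).symm
    _ ≤ _ := Real.sqrt_le_sqrt h1

lemma main_ineq (κ s c sδ cδ S12 S13 S23 μ1 μ2 y : ℝ)
    (h1 : s ^ 2 + c ^ 2 = 1) (h2 : sδ ^ 2 + cδ ^ 2 = 1)
    (hA : S13 + S23 = 2 * κ * s * cδ) (hB : S23 - S13 = 2 * κ * c * sδ)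
    (hC : S12 = 2 * κ * s * c)
    (hκ : 0 ≤ κ) (hs : 0 ≤ s) (hc : 0 ≤ c) (hsδ : 0 ≤ sδ) (hμ2 : 0 ≤ μ2) :
    S12 + S13 + S23 ≤
      Real.sqrt ((s * (S13 + S23) + (μ2 - μ1 + sδ) * (S23 - S13)) ^ 2
        + ((y + c) * (S13 + S23)) ^ 2)
      + S12 * Real.sqrt ((μ1 + μ2) ^ 2 + (cδ - y) ^ 2) := by
  have k1 := cs2 s c (s * (S13 + S23) + (μ2 - μ1 + sδ) * (S23 - S13))
    ((y + c) * (S13 + S23)) h1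
  have k2 := cs2 sδ cδ (μ1 + μ2) (cδ - y) h2
  have hσ : 0 ≤ S12 := by rw [hC]; positivity
  have k2' := mul_le_mul_of_nonneg_left k2 hσ
  have hS23 : S23 = κ * s * cδ + κ * c * sδ := by linarith
  have hS13 : S13 = κ * s * cδ - κ * c * sδ := by linarith
  have e : s * (s * (S13 + S23) + (μ2 - μ1 + sδ) * (S23 - S13))
      + c * ((y + c) * (S13 + S23))
      + S12 * (sδ * (μ1 + μ2) + cδ * (cδ - y))
      = S12 + S13 + S23 + 4 * κ * s * c * sδ * μ2 := by
    rw [hS23, hS13, hC]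
    linear_combination (2 * κ * s * cδ) * h1 + (2 * κ * s * c) * h2
  nlinarith [k1, k2', e, mul_nonneg (mul_nonneg (mul_nonneg (mul_nonneg hκ hs) hc) hsδ) hμ2]

/-- Appendix A: the minimization problem for `E(μ₁, μ₂, y*)`. -/
theorem statement9 (α1 α2 α3 κ : ℝ)
    (h1 : α1 ∈ Ioo 0 π) (h2 : α2 ∈ Ioo 0 π) (h3 : α3 ∈ Ioo 0 π)
    (hsum : α1 + α2 + α3 = 2*π) (h12 : α1 ≤ α2) (hκ : 0 < κ) :
    let σ23 : ℝ := κ * Real.sin α1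
    let σ13 : ℝ := κ * Real.sin α2
    let σ12 : ℝ := κ * Real.sin α3
    let E : ℝ → ℝ → ℝ → ℝ := fun μ1 μ2 y =>
      Real.sqrt ((Real.sin (α3/2) * (σ13 + σ23)
          + (μ2 - μ1 + Real.sin ((α2 - α1)/2)) * (σ23 - σ13)) ^ 2
        + ((y + Real.cos (α3/2)) * (σ13 + σ23)) ^ 2)
      + σ12 * Real.sqrt ((μ1 + μ2) ^ 2 + (Real.cos ((α2 - α1)/2) - y) ^ 2)
    (∀ μ1 ∈ Icc (0:ℝ) (Real.sin (α3/2) + Real.sin ((α2 - α1)/2)),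
      ∀ μ2 ∈ Icc (0:ℝ) (Real.sin (α3/2) - Real.sin ((α2 - α1)/2)),
        ∀ y ∈ Icc (-Real.cos (α3/2)) (Real.cos ((α2 - α1)/2)),
          σ12 + σ13 + σ23 ≤ E μ1 μ2 y) ∧
    E (Real.sin ((α2 - α1)/2)) 0 0 = σ12 + σ13 + σ23 := by
  intro σ23 σ13 σ12 E
  have pi_pos := Real.pi_pos
  have t1 := Real.sin_add (π - α3/2) ((α2 - α1)/2)
  have t2 := Real.sin_sub (π - α3/2) ((α2 - α1)/2)
  rw [show π - α3/2 + (α2 - α1)/2 = α2 by linarith] at t1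
  rw [show π - α3/2 - (α2 - α1)/2 = α1 by linarith] at t2
  rw [Real.sin_pi_sub, Real.cos_pi_sub] at t1 t2
  have e1 : Real.sin α1 + Real.sin α2
      = 2 * Real.sin (α3/2) * Real.cos ((α2 - α1)/2) := by
    linear_combination t1 + t2
  have e2 : Real.sin α1 - Real.sin α2
      = 2 * Real.sin ((α2 - α1)/2) * Real.cos (α3/2) := by
    linear_combination t2 - t1
  have e3 : Real.sin α3 = 2 * Real.sin (α3/2) * Real.cos (α3/2) := by
    have := Real.sin_two_mul (α3/2)
    rw [show 2 * (α3/2) = α3 by ring] at this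
    exact this
  have hs : 0 ≤ Real.sin (α3/2) :=
    (Real.sin_pos_of_pos_of_lt_pi (by linarith [h3.1]) (by linarith [h3.2])).le
  have hc : 0 ≤ Real.cos (α3/2) :=
    Real.cos_nonneg_of_mem_Icc ⟨by linarith [h3.1], by linarith [h3.2]⟩
  have hsδ : 0 ≤ Real.sin ((α2 - α1)/2) :=
    Real.sin_nonneg_of_nonneg_of_le_pi (by linarith) (by linarith [h2.2, h1.1])
  have hcδ : 0 ≤ Real.cos ((α2 - α1)/2) :=
    Real.cos_nonneg_of_mem_Icc ⟨by linarith [h2.2, h1.1], by linarith [h2.2, h1.1]⟩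
  have hA : σ13 + σ23 = 2 * κ * Real.sin (α3/2) * Real.cos ((α2 - α1)/2) := by
    show κ * Real.sin α2 + κ * Real.sin α1 = _
    linear_combination κ * e1
  have hB : σ23 - σ13 = 2 * κ * Real.cos (α3/2) * Real.sin ((α2 - α1)/2) := by
    show κ * Real.sin α1 - κ * Real.sin α2 = _
    linear_combination κ * e2
  have hC : σ12 = 2 * κ * Real.sin (α3/2) * Real.cos (α3/2) := by
    show κ * Real.sin α3 = _
    linear_combination κ * e3
  constructor
  · intro μ1 hμ1 μ2 hμ2 y hy
    exact main_ineq κ (Real.sin (α3/2)) (Real.cos (α3/2)) (Real.sin ((α2 - α1)/2))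
      (Real.cos ((α2 - α1)/2)) σ12 σ13 σ23 μ1 μ2 y
      (Real.sin_sq_add_cos_sq _) (Real.sin_sq_add_cos_sq _)
      hA hB hC hκ.le hs hc hsδ hμ2.1
  · show Real.sqrt _ + σ12 * Real.sqrt _ = _
    have hXnn : 0 ≤ σ13 + σ23 := by
      rw [hA]
      exact mul_nonneg (mul_nonneg (by linarith) hs) hcδ
    have harg1 : (Real.sin (α3/2) * (σ13 + σ23)
        + ((0:ℝ) - Real.sin ((α2 - α1)/2) + Real.sin ((α2 - α1)/2)) * (σ23 - σ13)) ^ 2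
        + (((0:ℝ) + Real.cos (α3/2)) * (σ13 + σ23)) ^ 2 = (σ13 + σ23) ^ 2 := by
      linear_combination (σ13 + σ23) ^ 2 * Real.sin_sq_add_cos_sq (α3/2)
    have harg2 : (Real.sin ((α2 - α1)/2) + (0:ℝ)) ^ 2
        + (Real.cos ((α2 - α1)/2) - (0:ℝ)) ^ 2 = 1 := by
      linear_combination Real.sin_sq_add_cos_sq ((α2 - α1)/2)
    rw [harg1, harg2, Real.sqrt_one, Real.sqrt_sq hXnn]
    ring
end
end

section
/- Let α₁, α₂, α₃ ∈ (0, π) satisfy α₁ + α₂ + α₃ = 2π and α₂ ≥ α₁. Define, for real μ and y, Ẽ(μ, y) := √( [sin(α₃/2)(sin α₁ + sin α₂) + μ(sin α₁ − sin α₂)]² + [(y + cos(α₃/2))(sin α₁ + sin α₂)]² ) + sin α₃ · √( (sin((α₂−α₁)/2) − μ)² + (cos((α₂−α₁)/2) − y)² ). Then for all μ ∈ [−sin(α₃/2), sin((α₂−α₁)/2)] and y ∈ [−cos(α₃/2), cos((α₂−α₁)/2)] one has Ẽ(μ, y) ≥ sin α₁ + sin α₂ + sin α₃, and equality holds if and only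 if μ = 0 and y = 0. -/
noncomputable section

open MeasureTheory Real Set Metric Filter Topology
open scoped RealInnerProductSpace

lemma cs_le (a b X Y : ℝ) (hab : a^2 + b^2 = 1) :
    a*X + b*Y ≤ Real.sqrt (X^2 + Y^2) := by
  have h2 : |a*X+b*Y| = Real.sqrt ((a*X+b*Y)^2) := (Real.sqrt_sq_eq_abs _).symm
  have h3 : Real.sqrt ((a*X+b*Y)^2) ≤ Real.sqrt (X^2+Y^2) := by
    apply Real.sqrt_le_sqrt; nlinarith [sq_nonneg (b*X - a*Y)]
  calc a*X+b*Y ≤ |a*X+b*Y| := le_abs_self _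
    _ = _ := h2
    _ ≤ _ := h3

lemma cs_eq (a b X Y : ℝ) (hab : a^2 + b^2 = 1)
    (h : Real.sqrt (X^2 + Y^2) = a*X + b*Y) : b*X = a*Y := by
  have h0 : (0:ℝ) ≤ X^2 + Y^2 := by positivity
  have hsq := Real.sq_sqrt h0
  rw [h] at hsq
  have hz : (b*X - a*Y)^2 = 0 := by nlinarith
  have := pow_eq_zero_iff (n := 2) (by norm_num) |>.mp hz
  linarith

lemma main_aux (α1 α2 α3 μ y : ℝ)
    (h1 : α1 ∈ Set.Ioo 0 π) (h2 : α2 ∈ Set.Ioo 0 π) (h3 : α3 ∈ Set.Ioo 0 π)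
    (hsum : α1 + α2 + α3 = 2*π) :
    Real.sin α1 + Real.sin α2 + Real.sin α3 ≤
      Real.sqrt ((Real.sin (α3/2) * (Real.sin α1 + Real.sin α2)
          + μ * (Real.sin α1 - Real.sin α2)) ^ 2
        + ((y + Real.cos (α3/2)) * (Real.sin α1 + Real.sin α2)) ^ 2)
      + Real.sin α3 *
        Real.sqrt ((Real.sin ((α2 - α1)/2) - μ) ^ 2 + (Real.cos ((α2 - α1)/2) - y) ^ 2) ∧
    (Real.sqrt ((Real.sin (α3/2) * (Real.sin α1 + Real.sin α2)
          + μ * (Real.sin α1 - Real.sin α2)) ^ 2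
        + ((y + Real.cos (α3/2)) * (Real.sin α1 + Real.sin α2)) ^ 2)
      + Real.sin α3 *
        Real.sqrt ((Real.sin ((α2 - α1)/2) - μ) ^ 2 + (Real.cos ((α2 - α1)/2) - y) ^ 2)
      = Real.sin α1 + Real.sin α2 + Real.sin α3 ↔ μ = 0 ∧ y = 0) := by
  obtain ⟨ha1, hb1⟩ := h1
  obtain ⟨ha2, hb2⟩ := h2
  obtain ⟨ha3, hb3⟩ := h3
  have hpi := Real.pi_pos
  set s := Real.sin (α3/2) with hs_def
  set c := Real.cos (α3/2) with hc_def
  set sb := Real.sin ((α2-α1)/2) with hsb_def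
  set cb := Real.cos ((α2-α1)/2) with hcb_def
  have hs1 : 0 < Real.sin α1 := Real.sin_pos_of_pos_of_lt_pi ha1 hb1
  have hs2 : 0 < Real.sin α2 := Real.sin_pos_of_pos_of_lt_pi ha2 hb2
  have hs3 : 0 < Real.sin α3 := Real.sin_pos_of_pos_of_lt_pi ha3 hb3
  have hu1 : s^2 + c^2 = 1 := Real.sin_sq_add_cos_sq _
  have hu2 : sb^2 + cb^2 = 1 := Real.sin_sq_add_cos_sq _
  have e1 : Real.sin α1 + Real.sin α2 = 2 * s * cb := by
    have h := Real.sin_sub_sin α1 (-α2)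
    rw [Real.sin_neg, show α1 - -α2 = α1 + α2 by ring, show α1 + -α2 = α1 - α2 by ring,
      show (α1+α2)/2 = π - α3/2 by linarith, Real.sin_pi_sub,
      show (α1-α2)/2 = -((α2-α1)/2) by ring, Real.cos_neg] at h
    linarith
  have e2 : Real.sin α1 - Real.sin α2 = 2 * c * sb := by
    rw [Real.sin_sub_sin, show (α1+α2)/2 = π - α3/2 by linarith, Real.cos_pi_sub,
      show (α1-α2)/2 = -((α2-α1)/2) by ring, Real.sin_neg]
    ring
  have e3 : Real.sin α3 = 2 * s * c := by
    have := Real.sin_two_mul (α3/2)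
    rw [show 2*(α3/2) = α3 by ring] at this
    exact this
  have eA : s * cb - c * sb = Real.sin α2 := by
    rw [hs_def, hc_def, hsb_def, hcb_def, ← Real.sin_sub,
      show α3/2 - (α2-α1)/2 = π - α2 by linarith, Real.sin_pi_sub]
  have eB : s * cb + c * sb = Real.sin α1 := by
    rw [hs_def, hc_def, hsb_def, hcb_def, ← Real.sin_add,
      show α3/2 + (α2-α1)/2 = π - α1 by linarith, Real.sin_pi_sub]
  set X1 := s * (Real.sin α1 + Real.sin α2) + μ * (Real.sin α1 - Real.sin α2) with hX1
  set Y1 := (y + c) * (Real.sin α1 + Real.sin α2) with hY1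
  set X2 := sb - μ with hX2
  set Y2 := cb - y with hY2
  have key : s*X1 + c*Y1 + Real.sin α3 * (sb*X2 + cb*Y2)
      = Real.sin α1 + Real.sin α2 + Real.sin α3 := by
    rw [hX1, hY1, hX2, hY2, e1, e2, e3]
    linear_combination (2*s*cb) * hu1 + (2*s*c) * hu2
  have b1 : s*X1 + c*Y1 ≤ Real.sqrt (X1^2 + Y1^2) := cs_le _ _ _ _ hu1
  have b2 : sb*X2 + cb*Y2 ≤ Real.sqrt (X2^2 + Y2^2) := cs_le _ _ _ _ hu2
  have b2' : Real.sin α3 * (sb*X2 + cb*Y2) ≤ Real.sin α3 * Real.sqrt (X2^2 + Y2^2) :=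
    mul_le_mul_of_nonneg_left b2 hs3.le
  refine ⟨by linarith, ?_, ?_⟩
  · intro heq
    have hq1 : Real.sqrt (X1^2 + Y1^2) = s*X1 + c*Y1 := by linarith
    have hq2' : Real.sin α3 * Real.sqrt (X2^2 + Y2^2) = Real.sin α3 * (sb*X2 + cb*Y2) := by
      linarith
    have hq2 : Real.sqrt (X2^2 + Y2^2) = sb*X2 + cb*Y2 :=
      mul_left_cancel₀ (ne_of_gt hs3) hq2'
    have hI0 : c*X1 = s*Y1 := cs_eq _ _ _ _ hu1 hq1
    have hII0 : cb*X2 = sb*Y2 := cs_eq _ _ _ _ hu2 hq2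
    have hI : μ * c^2 * sb = s^2 * cb * y := by
      rw [hX1, hY1, e1, e2] at hI0; linarith [hI0]
    have hII : cb * μ = sb * y := by rw [hX2, hY2] at hII0; linarith [hII0]
    have hdet : s^2*cb^2 - c^2*sb^2 = Real.sin α1 * Real.sin α2 := by
      linear_combination (s*cb + c*sb) * eA + Real.sin α2 * eB
    have hdetpos : 0 < s^2*cb^2 - c^2*sb^2 := by rw [hdet]; positivity
    have hmu : μ * (s^2*cb^2 - c^2*sb^2) = 0 := by
      linear_combination (s^2*cb)*hII - sb*hI
    have hy : y * (s^2*cb^2 - c^2*sb^2) = 0 := by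
      linear_combination c^2*sb*hII - cb*hI
    constructor
    · rcases mul_eq_zero.mp hmu with h | h
      · exact h
      · linarith
    · rcases mul_eq_zero.mp hy with h | h
      · exact h
      · linarith
  · rintro ⟨rfl, rfl⟩
    have hpos : 0 ≤ Real.sin α1 + Real.sin α2 := by linarith
    have hx1 : X1^2 + Y1^2 = (Real.sin α1 + Real.sin α2)^2 := by
      rw [hX1, hY1]; ring_nf; linear_combination (Real.sin α1 + Real.sin α2)^2 * hu1
    have hx2 : X2^2 + Y2^2 = 1 := by
      rw [hX2, hY2]; simpa using hu2
    rw [hx1, hx2, Real.sqrt_one, Real.sqrt_sq hpos]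
    ring

/-- Appendix A: the reduced minimization problem for `Ẽ(μ*, y*)`, with characterization of
equality. -/
theorem statement10 (α1 α2 α3 : ℝ)
    (h1 : α1 ∈ Ioo 0 π) (h2 : α2 ∈ Ioo 0 π) (h3 : α3 ∈ Ioo 0 π)
    (hsum : α1 + α2 + α3 = 2*π) (h12 : α1 ≤ α2) :
    let Et : ℝ → ℝ → ℝ := fun μ y =>
      Real.sqrt ((Real.sin (α3/2) * (Real.sin α1 + Real.sin α2)
          + μ * (Real.sin α1 - Real.sin α2)) ^ 2
        + ((y + Real.cos (α3/2)) * (Real.sin α1 + Real.sin α2)) ^ 2)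
      + Real.sin α3 *
        Real.sqrt ((Real.sin ((α2 - α1)/2) - μ) ^ 2 + (Real.cos ((α2 - α1)/2) - y) ^ 2)
    ∀ μ ∈ Icc (-Real.sin (α3/2)) (Real.sin ((α2 - α1)/2)),
      ∀ y ∈ Icc (-Real.cos (α3/2)) (Real.cos ((α2 - α1)/2)),
        Real.sin α1 + Real.sin α2 + Real.sin α3 ≤ Et μ y ∧
        (Et μ y = Real.sin α1 + Real.sin α2 + Real.sin α3 ↔ μ = 0 ∧ y = 0) := by
  intro Et μ hμ y hy
  exact main_aux α1 α2 α3 μ y h1 h2 h3 hsum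
end
end

section
/- Let α₁, α₂, α₃ ∈ (0, π) satisfy α₁ + α₂ + α₃ = 2π and α₂ ≥ α₁. If real numbers μ and y satisfy the two equality conditions (i) [sin(α₃/2)(sin α₁ + sin α₂) + μ(sin α₁ − sin α₂)] · cos(α₃/2) = sin(α₃/2) · (y + cos(α₃/2))(sin α₁ + sin α₂) and (ii) (sin((α₂−α₁)/2) − μ) · cos((α₂−α₁)/2) = sin((α₂−α₁)/2) · (cos((α₂−α₁)/2) − y), then μ = 0 and y = 0. -/
noncomputable section

open MeasureTheory Real Set Metric Filter Topology
open scoped RealInnerProductSpace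

/-- Appendix A: the two equality (Cauchy–Schwarz) conditions force `μ = 0` and `y = 0`. -/
theorem statement11 (α1 α2 α3 : ℝ)
    (h1 : α1 ∈ Ioo 0 π) (h2 : α2 ∈ Ioo 0 π) (h3 : α3 ∈ Ioo 0 π)
    (hsum : α1 + α2 + α3 = 2*π) (h12 : α1 ≤ α2)
    (μ y : ℝ)
    (heq1 : (Real.sin (α3/2) * (Real.sin α1 + Real.sin α2)
        + μ * (Real.sin α1 - Real.sin α2)) * Real.cos (α3/2)
      = Real.sin (α3/2) * ((y + Real.cos (α3/2)) * (Real.sin α1 + Real.sin α2)))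
    (heq2 : (Real.sin ((α2 - α1)/2) - μ) * Real.cos ((α2 - α1)/2)
      = Real.sin ((α2 - α1)/2) * (Real.cos ((α2 - α1)/2) - y)) :
    μ = 0 ∧ y = 0 := by
  obtain ⟨h1a, h1b⟩ := h1
  obtain ⟨h2a, h2b⟩ := h2
  obtain ⟨h3a, h3b⟩ := h3
  set β := (α2 - α1)/2 with hβ
  have hs1 : Real.sin α1 = Real.sin (α3/2) * Real.cos β + Real.cos (α3/2) * Real.sin β := by
    have h : α1 = π - (α3/2 + β) := by rw [hβ]; linarith
    rw [h, Real.sin_pi_sub, Real.sin_add]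
  have hs2 : Real.sin α2 = Real.sin (α3/2) * Real.cos β - Real.cos (α3/2) * Real.sin β := by
    have h : α2 = π - (α3/2 - β) := by rw [hβ]; linarith
    rw [h, Real.sin_pi_sub, Real.sin_sub]
  have hp1 : 0 < Real.sin α1 := Real.sin_pos_of_pos_of_lt_pi h1a h1b
  have hp2 : 0 < Real.sin α2 := Real.sin_pos_of_pos_of_lt_pi h2a h2b
  have hs3 : 0 < Real.sin (α3/2) :=
    Real.sin_pos_of_pos_of_lt_pi (by linarith) (by linarith [Real.pi_pos])
  have hcβ : 0 < Real.cos β := by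
    apply Real.cos_pos_of_mem_Ioo
    constructor <;> [linarith; linarith]
  have e2 : μ * Real.cos β = y * Real.sin β := by linear_combination -heq2
  rw [hs1, hs2] at heq1
  have e1 : μ * Real.cos (α3/2)^2 * Real.sin β = y * Real.sin (α3/2)^2 * Real.cos β := by
    linear_combination heq1/2
  have hprod : Real.sin α1 * Real.sin α2
      = Real.sin (α3/2)^2 * Real.cos β^2 - Real.cos (α3/2)^2 * Real.sin β^2 := by
    rw [hs1, hs2]; ring
  have key : μ * (Real.sin α1 * Real.sin α2) = 0 := by
    rw [hprod]
    linear_combination (Real.sin (α3/2)^2 * Real.cos β) * e2 - Real.sin β * e1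
  have hμ : μ = 0 := by
    rcases mul_eq_zero.mp key with h | h
    · exact h
    · exact absurd h (mul_pos hp1 hp2).ne'
  have hy : y = 0 := by
    rw [hμ] at e1
    have h0 : y * Real.sin (α3/2)^2 * Real.cos β = 0 := by linarith [e1]
    rcases mul_eq_zero.mp h0 with h | h
    · rcases mul_eq_zero.mp h with h' | h'
      · exact h'
      · exact absurd h' (pow_pos hs3 2).ne'
    · exact absurd h hcβ.ne'
  exact ⟨hμ, hy⟩
end
end

section
/- Let α₁, α₂, α₃ ∈ (0, π) satisfy α₁ + α₂ + α₃ = 2π and α₂ ≥ α₁. Then the strict inequality (sin α₁ + sin α₂ + sin α₃)² < [ (sin(α₃/2) − sin((α₂−α₁)/2)) sin α₂ + (sin(α₃/2) + sin((α₂−α₁)/2)) sin α₁ ]² + [ (sin α₁ + sin α₂)(cos(α₃/2) + cos((α₂−α₁)/2)) ]² holds. -/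
noncomputable section

open MeasureTheory Real Set Metric Filter Topology
open scoped RealInnerProductSpace

/-- Appendix B: the strict inequality used in Case 2 of the weak lower bound. -/
theorem statement12 (α1 α2 α3 : ℝ)
    (h1 : α1 ∈ Ioo 0 π) (h2 : α2 ∈ Ioo 0 π) (h3 : α3 ∈ Ioo 0 π)
    (hsum : α1 + α2 + α3 = 2*π) (h12 : α1 ≤ α2) :
    (Real.sin α1 + Real.sin α2 + Real.sin α3) ^ 2 <
      ((Real.sin (α3/2) - Real.sin ((α2 - α1)/2)) * Real.sin α2
        + (Real.sin (α3/2) + Real.sin ((α2 - α1)/2)) * Real.sin α1) ^ 2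
      + ((Real.sin α1 + Real.sin α2)
          * (Real.cos (α3/2) + Real.cos ((α2 - α1)/2))) ^ 2 := by
  obtain ⟨h1l, h1r⟩ := h1
  obtain ⟨h2l, h2r⟩ := h2
  obtain ⟨h3l, h3r⟩ := h3
  set s := α3/2 with hs
  set d := (α2 - α1)/2 with hd
  have hpi := Real.pi_pos
  have hs0 : 0 < s := by simp only [hs]; linarith
  have hs2 : s < π/2 := by simp only [hs]; linarith
  have hd0 : 0 ≤ d := by simp only [hd]; linarith
  have hds : d < s := by simp only [hd, hs]; linarith
  have e1 : α1 = π - (s + d) := by simp only [hs, hd]; linarith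
  have e2 : α2 = π - (s - d) := by simp only [hs, hd]; linarith
  have e3 : α3 = 2 * s := by simp only [hs]; ring
  have hsin1 : Real.sin α1 = Real.sin s * Real.cos d + Real.cos s * Real.sin d := by
    rw [e1, Real.sin_pi_sub, Real.sin_add]
  have hsin2 : Real.sin α2 = Real.sin s * Real.cos d - Real.cos s * Real.sin d := by
    rw [e2, Real.sin_pi_sub, Real.sin_sub]
  have hsin3 : Real.sin α3 = 2 * Real.sin s * Real.cos s := by
    rw [e3, Real.sin_two_mul]
  have hA : 0 < Real.sin α1 := Real.sin_pos_of_pos_of_lt_pi h1l h1r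
  have hB : 0 < Real.sin α2 := Real.sin_pos_of_pos_of_lt_pi h2l h2r
  have hsd : Real.sin d < Real.sin s := by
    exact Real.sin_lt_sin_of_lt_of_le_pi_div_two (by linarith) (by linarith) hds
  have hd0' : 0 ≤ Real.sin d := Real.sin_nonneg_of_nonneg_of_le_pi hd0 (by linarith)
  have hprod : 0 < (Real.sin s - Real.sin d) * (Real.sin s + Real.sin d)
      * Real.sin α1 * Real.sin α2 := by
    apply mul_pos (mul_pos (mul_pos (by linarith) (by linarith)) hA) hB
  have hpy := Real.sin_sq_add_cos_sq d
  rw [hsin1, hsin2, hsin3] at *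
  nlinarith [hprod, hpy, sq_nonneg (Real.sin s * (Real.cos s + Real.cos d))]
end
end
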